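/- arXiv:2204.01772 — 2 statements merged into one kernel-verified Lean document; each statement's English description precedes it below -/
import Mathlib

section
/- Let n be a positive integer and let a, b, c be nonnegative integers with a + b + c = n, c ≤ a, and c ≤ b. Let m = max(a, b, c). Then ⌈(a + b - 2)/3⌉ + ⌈(c - 1)/2⌉ ≤ (5n - m)/12, where the inequality is between rational numbers. -/
theorem stmt_10 (n a b c : ℕ) (hn : 0 < n) (hsum : a + b + c = n)
    (hca : c ≤ a) (hcb : c ≤ b) :
    ((⌈((a : ℚ) + (b : ℚ) - 2) / 3⌉ + ⌈((c : ℚ) - 1) / 2⌉ : ℤ) : ℚ)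
      ≤ (5 * (n : ℚ) - (max a (max b c) : ℚ)) / 12 := by
  set M := max a (max b c) with hMdef
  have hm : M + c ≤ a + b := by
    have h1 : max b c = b := max_eq_left hcb
    rw [hMdef, h1]
    rcases le_total a b with h | h
    · rw [max_eq_right h]; omega
    · rw [max_eq_left h]; omega
  have h1q : ((⌈((a : ℚ) + (b : ℚ) - 2) / 3⌉ : ℤ) : ℚ)
      < ((a : ℚ) + (b : ℚ) - 2) / 3 + 1 := Int.ceil_lt_add_one _
  have h1 : (3 : ℤ) * ⌈((a : ℚ) + (b : ℚ) - 2) / 3⌉ < (a : ℤ) + b + 1 := by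
    have : (3 : ℚ) * ((⌈((a : ℚ) + (b : ℚ) - 2) / 3⌉ : ℤ) : ℚ)
        < (a : ℚ) + b + 1 := by linarith
    exact_mod_cast this
  have h2q : ((⌈((c : ℚ) - 1) / 2⌉ : ℤ) : ℚ)
      < ((c : ℚ) - 1) / 2 + 1 := Int.ceil_lt_add_one _
  have h2 : (2 : ℤ) * ⌈((c : ℚ) - 1) / 2⌉ < (c : ℤ) + 1 := by
    have : (2 : ℚ) * ((⌈((c : ℚ) - 1) / 2⌉ : ℤ) : ℚ)
        < (c : ℚ) + 1 := by linarith
    exact_mod_cast this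
  have h1' : (3 : ℤ) * ⌈((a : ℚ) + (b : ℚ) - 2) / 3⌉ ≤ (a : ℤ) + b := by omega
  have h2' : (2 : ℤ) * ⌈((c : ℚ) - 1) / 2⌉ ≤ (c : ℤ) := by omega
  have h1'' : (3 : ℚ) * ((⌈((a : ℚ) + (b : ℚ) - 2) / 3⌉ : ℤ) : ℚ) ≤ (a : ℚ) + b := by
    exact_mod_cast h1'
  have h2'' : (2 : ℚ) * ((⌈((c : ℚ) - 1) / 2⌉ : ℤ) : ℚ) ≤ (c : ℚ) := by
    exact_mod_cast h2'
  have hmq : ((M : ℕ) : ℚ) + c ≤ (a : ℚ) + b := by exact_mod_cast hm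
  have hnq : (n : ℚ) = (a : ℚ) + b + c := by exact_mod_cast hsum.symm
  have hMQ : ((M : ℕ) : ℚ) = max (a : ℚ) (max (b : ℚ) (c : ℚ)) := by
    simp [hMdef, Nat.cast_max]
  push_cast
  push_cast at h1'' h2''
  rw [hnq, ← hMQ]
  linarith
end

section
/- Let n be a positive integer and let a, b, c be nonnegative integers with a + b + c = n, c ≤ a, and c ≤ b. Then ⌈(a + b - 2)/3⌉ + ⌈(c - 1)/2⌉ ≤ 7n/18, where the inequality is between rationals; in particular the left-hand side is at most ⌊7n/18⌋. -/
theorem stmt_11 (n a b c : ℕ) (hn : 0 < n) (hsum : a + b + c = n)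
    (hca : c ≤ a) (hcb : c ≤ b) :
    ((⌈((a : ℚ) + (b : ℚ) - 2) / 3⌉ + ⌈((c : ℚ) - 1) / 2⌉ : ℤ) : ℚ)
        ≤ 7 * (n : ℚ) / 18 ∧
    (⌈((a : ℚ) + (b : ℚ) - 2) / 3⌉ + ⌈((c : ℚ) - 1) / 2⌉ : ℤ)
        ≤ ⌊7 * (n : ℚ) / 18⌋ := by
  have h3 : a + b ≤ 3 * ((a + b) / 3) + 2 := by omega
  have h2 : c ≤ 2 * (c / 2) + 1 := by omega
  have hc3 : 3 * c ≤ n := by omega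
  have H1 : ⌈((a : ℚ) + (b : ℚ) - 2) / 3⌉ ≤ (((a + b) / 3 : ℕ) : ℤ) := by
    rw [Int.ceil_le, div_le_iff₀ (by norm_num : (0:ℚ) < 3)]
    have h3' : ((a + b : ℕ) : ℚ) ≤ 3 * (((a + b) / 3 : ℕ) : ℚ) + 2 := by
      exact_mod_cast h3
    have e : ((((a + b) / 3 : ℕ) : ℤ) : ℚ) = (((a + b) / 3 : ℕ) : ℚ) := by
      exact Int.cast_natCast _
    rw [e]
    push_cast at h3'
    linarith
  have H2 : ⌈((c : ℚ) - 1) / 2⌉ ≤ ((c / 2 : ℕ) : ℤ) := by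
    rw [Int.ceil_le, div_le_iff₀ (by norm_num : (0:ℚ) < 2)]
    have h2' : ((c : ℕ) : ℚ) ≤ 2 * ((c / 2 : ℕ) : ℚ) + 1 := by
      exact_mod_cast h2
    have e : (((c / 2 : ℕ) : ℤ) : ℚ) = ((c / 2 : ℕ) : ℚ) := Int.cast_natCast _
    rw [e]
    linarith
  have hA : (((a + b) / 3 : ℕ) : ℚ) ≤ ((a : ℚ) + b) / 3 := by
    have := Nat.cast_div_le (α := ℚ) (m := a + b) (n := 3)
    push_cast at this
    linarith
  have hB : ((c / 2 : ℕ) : ℚ) ≤ (c : ℚ) / 2 := by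
    have := Nat.cast_div_le (α := ℚ) (m := c) (n := 2)
    push_cast at this
    linarith
  have hsum' : (a : ℚ) + b + c = n := by exact_mod_cast hsum
  have hc3' : 3 * (c : ℚ) ≤ n := by exact_mod_cast hc3
  have key : ((⌈((a : ℚ) + (b : ℚ) - 2) / 3⌉ + ⌈((c : ℚ) - 1) / 2⌉ : ℤ) : ℚ)
      ≤ 7 * (n : ℚ) / 18 := by
    have H1' : ((⌈((a : ℚ) + (b : ℚ) - 2) / 3⌉ : ℤ) : ℚ) ≤ ((((a + b) / 3 : ℕ) : ℤ) : ℚ) :=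
      Int.cast_le.mpr H1
    have H2' : ((⌈((c : ℚ) - 1) / 2⌉ : ℤ) : ℚ) ≤ (((c / 2 : ℕ) : ℤ) : ℚ) :=
      Int.cast_le.mpr H2
    rw [Int.cast_natCast] at H1' H2'
    push_cast
    linarith
  exact ⟨key, Int.le_floor.mpr key⟩
end
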